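/- arXiv:0803.2656 — 4 statements merged into one kernel-verified Lean document; each statement's English description precedes it below -/
import Mathlib

section
/- Let E be a sublinear functional on (Ω, H), i.e. E : H → ℝ satisfies sub-additivity (E[X] − E[Y] ≤ E[X − Y] for all X, Y ∈ H) and positive homogeneity (E[λX] = λE[X] for all λ ≥ 0). Then there exists a family Q of linear functionals on H such that E[X] = sup_{L ∈ Q} L[X] for every X ∈ H, and such that for each X ∈ H there exists L ∈ Q with E[X] = L[X]. If moreover E is monotone (X ≥ Y pointwise implies E[X] ≥ E[Y]), then every L ∈ Q is monotone; if in addition E preserves constants (E[c] = c for every constant c), then every L ∈ Q preserves constants. -/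
/-!
Fix `X ∈ H`. On the line `ℝ X` the functional `c X ↦ c E[X]` is dominated by `E`: for `c ≥ 0`
this is positive homogeneity, and for `c < 0` it reduces to `0 = E[0] ≤ E[X] + E[-X]`.
Hahn–Banach extends it to a linear functional on `H` dominated by `E` and equal to `E[X]` at `X`,
so the dominated linear functionals represent `E` with the supremum attained. If `E` is monotone,
a dominated `L` satisfies `L[Y] - L[X] = L[Y - X] ≤ E[Y - X] ≤ E[0] = 0` for `Y ≤ X`; if `E`
preserves constants, `L[c] ≤ c` and `-L[c] = L[-c] ≤ -c`.
-/

section Sublinear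

variable {V : Type*} [AddCommGroup V] [Module ℝ V] {N : V → ℝ}

lemma map_zero_of_pos_homogeneous (N_hom : ∀ c : ℝ, 0 < c → ∀ x, N (c • x) = c * N x) :
    N 0 = 0 := by
  have h := N_hom 2 two_pos 0
  rw [smul_zero] at h
  linarith

lemma mul_le_of_sublinear (N_hom : ∀ c : ℝ, 0 < c → ∀ x, N (c • x) = c * N x)
    (N_add : ∀ x y, N (x + y) ≤ N x + N y) (c : ℝ) (x : V) : c * N x ≤ N (c • x) := by
  have N_zero := map_zero_of_pos_homogeneous N_hom
  rcases lt_trichotomy c 0 with hc | rfl | hc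
  · have h_neg : 0 ≤ N x + N (-x) := by simpa [N_zero] using N_add x (-x)
    have h_scale : N (c • x) = -c * N (-x) := by
      rw [← N_hom (-c) (neg_pos.mpr hc) (-x), neg_smul_neg]
    rw [h_scale]
    nlinarith
  · simp [N_zero]
  · exact (N_hom c hc x).ge

theorem exists_linearMap_le_sublinear_eq (N_hom : ∀ c : ℝ, 0 < c → ∀ x, N (c • x) = c * N x)
    (N_add : ∀ x y, N (x + y) ≤ N x + N y) (x : V) :
    ∃ g : V →ₗ[ℝ] ℝ, (∀ v, g v ≤ N v) ∧ g x = N x := by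
  have N_zero := map_zero_of_pos_homogeneous N_hom
  have h_ker : ∀ c : ℝ, c • x = 0 → c • N x = 0 := by
    intro c hcx
    rcases smul_eq_zero.mp hcx with rfl | rfl
    · exact zero_smul ℝ _
    · rw [N_zero, smul_zero]
  set f := LinearPMap.mkSpanSingleton' (σ := RingHom.id ℝ) x (N x) h_ker
  have hf_le : ∀ y : f.domain, f y ≤ N y := by
    rintro ⟨y, hy⟩
    obtain ⟨c, rfl⟩ := Submodule.mem_span_singleton.mp hy
    rw [LinearPMap.mkSpanSingleton'_apply, smul_eq_mul]
    exact mul_le_of_sublinear N_hom N_add c x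
  obtain ⟨g, hg_ext, hg_le⟩ := exists_extension_of_le_sublinear f N N_hom N_add hf_le
  have hx : x ∈ f.domain := Submodule.mem_span_singleton_self x
  exact ⟨g, hg_le, (hg_ext ⟨x, hx⟩).trans (LinearPMap.mkSpanSingleton'_apply_self x (N x) h_ker hx)⟩

end Sublinear

section SublinearOnSubmodule

variable {M : Type*} [AddCommGroup M] [Module ℝ M] {V : Submodule ℝ M} {E : M → ℝ}

theorem exists_linearMap_le_on_eq (hsub : ∀ X ∈ V, ∀ Y ∈ V, E X - E Y ≤ E (X - Y))
    (hpos : ∀ X ∈ V, ∀ l : ℝ, 0 ≤ l → E (l • X) = l * E X) {X : M} (hX : X ∈ V) :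
    ∃ φ : M →ₗ[ℝ] ℝ, (∀ Y ∈ V, φ Y ≤ E Y) ∧ φ X = E X := by
  have N_add : ∀ x y : V, E ↑(x + y) ≤ E x + E y := fun x y => by
    have h := hsub _ (x + y).2 _ y.2
    rw [Submodule.coe_add, add_sub_cancel_right] at h
    rw [Submodule.coe_add]
    linarith
  obtain ⟨g, hg_le, hg_eq⟩ := exists_linearMap_le_sublinear_eq (N := fun v : V => E v)
    (fun c hc x => hpos x x.2 c hc.le) N_add ⟨X, hX⟩
  obtain ⟨φ, rfl⟩ := LinearMap.exists_extend g
  exact ⟨φ, fun Y hY => hg_le ⟨Y, hY⟩, hg_eq⟩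

theorem map_le_map_of_le_on [PartialOrder M] [IsOrderedAddMonoid M] (φ : M →ₗ[ℝ] ℝ)
    (hφ : ∀ Y ∈ V, φ Y ≤ E Y) (hpos : ∀ X ∈ V, ∀ l : ℝ, 0 ≤ l → E (l • X) = l * E X)
    (hmono : ∀ X ∈ V, ∀ Y ∈ V, Y ≤ X → E Y ≤ E X) {X Y : M} (hX : X ∈ V) (hY : Y ∈ V)
    (hYX : Y ≤ X) : φ Y ≤ φ X := by
  have E_zero : E 0 = 0 := by simpa using hpos 0 V.zero_mem 0 le_rfl
  have hsub := V.sub_mem hY hX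
  have h := (hφ _ hsub).trans (hmono 0 V.zero_mem _ hsub (sub_nonpos.mpr hYX))
  rw [map_sub, E_zero] at h
  linarith

end SublinearOnSubmodule

theorem map_const_of_le_on {Ω : Type*} {V : Submodule ℝ (Ω → ℝ)} {E : (Ω → ℝ) → ℝ}
    (φ : (Ω → ℝ) →ₗ[ℝ] ℝ) (hφ : ∀ Y ∈ V, φ Y ≤ E Y) (hV : ∀ c : ℝ, (fun _ => c) ∈ V)
    (hE : ∀ c : ℝ, E (fun _ => c) = c) (c : ℝ) : φ (fun _ => c) = c := by
  have h_le := (hφ _ (hV c)).trans_eq (hE c)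
  have h_neg := (hφ _ (hV (-c))).trans_eq (hE (-c))
  rw [show (fun _ : Ω => -c) = -fun _ => c from rfl, map_neg] at h_neg
  linarith

theorem stmt_0_general {Ω : Type*} (H : Set (Ω → ℝ))
    (Hconst : ∀ c : ℝ, (fun _ => c) ∈ H)
    (Hadd : ∀ X ∈ H, ∀ Y ∈ H, X + Y ∈ H)
    (Hsmul : ∀ X ∈ H, ∀ c : ℝ, c • X ∈ H)
    (E : (Ω → ℝ) → ℝ)
    (hsub : ∀ X ∈ H, ∀ Y ∈ H, E X - E Y ≤ E (X - Y))
    (hpos : ∀ X ∈ H, ∀ l : ℝ, 0 ≤ l → E (l • X) = l * E X) :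
    ∃ Q : Set ((Ω → ℝ) → ℝ),
      (∀ L ∈ Q, (∀ X ∈ H, ∀ Y ∈ H, L (X + Y) = L X + L Y) ∧
        (∀ X ∈ H, ∀ c : ℝ, L (c • X) = c * L X)) ∧
      (∀ X ∈ H, IsGreatest ((fun L => L X) '' Q) (E X)) ∧
      ((∀ X ∈ H, ∀ Y ∈ H, (∀ ω, Y ω ≤ X ω) → E Y ≤ E X) →
        ∀ L ∈ Q, ∀ X ∈ H, ∀ Y ∈ H, (∀ ω, Y ω ≤ X ω) → L Y ≤ L X) ∧
      ((∀ X ∈ H, ∀ Y ∈ H, (∀ ω, Y ω ≤ X ω) → E Y ≤ E X) →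
        (∀ c : ℝ, E (fun _ => c) = c) →
        ∀ L ∈ Q, ∀ c : ℝ, L (fun _ => c) = c) := by
  let V : Submodule ℝ (Ω → ℝ) :=
    { carrier := H
      add_mem' := fun {X Y} hX hY => Hadd X hX Y hY
      zero_mem' := Hconst 0
      smul_mem' := fun c X hX => Hsmul X hX c }
  refine ⟨(⇑) '' {φ : (Ω → ℝ) →ₗ[ℝ] ℝ | ∀ Y ∈ V, φ Y ≤ E Y}, ?_, ?_, ?_, ?_⟩
  · rintro _ ⟨φ, -, rfl⟩
    exact ⟨fun X _ Y _ => map_add φ X Y, fun X _ c => map_smul φ c X⟩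
  · intro X hX
    obtain ⟨φ, hφ_le, hφ_eq⟩ := exists_linearMap_le_on_eq (V := V) hsub hpos hX
    refine ⟨⟨φ, ⟨φ, hφ_le, rfl⟩, hφ_eq⟩, ?_⟩
    rintro _ ⟨_, ⟨ψ, hψ, rfl⟩, rfl⟩
    exact hψ X hX
  · rintro hmono _ ⟨φ, hφ, rfl⟩ X hX Y hY hYX
    exact map_le_map_of_le_on (V := V) φ hφ hpos hmono hX hY hYX
  · rintro - hconst _ ⟨φ, hφ, rfl⟩ c
    exact map_const_of_le_on (V := V) φ hφ Hconst hconst c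

/-- Representation of a sublinear functional as a supremum of dominated linear
functionals, with the supremum attained, and preservation of monotonicity and
constant-preservation by the representing family. -/
theorem stmt_0 {Ω : Type*} (H : Set (Ω → ℝ))
    (Hconst : ∀ c : ℝ, (fun _ => c) ∈ H)
    (Hadd : ∀ X ∈ H, ∀ Y ∈ H, X + Y ∈ H)
    (Hsmul : ∀ X ∈ H, ∀ c : ℝ, c • X ∈ H)
    (Habs : ∀ X ∈ H, (fun ω => |X ω|) ∈ H)
    (E : (Ω → ℝ) → ℝ)
    (hsub : ∀ X ∈ H, ∀ Y ∈ H, E X - E Y ≤ E (X - Y))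
    (hpos : ∀ X ∈ H, ∀ l : ℝ, 0 ≤ l → E (l • X) = l * E X) :
    ∃ Q : Set ((Ω → ℝ) → ℝ),
      (∀ L ∈ Q, (∀ X ∈ H, ∀ Y ∈ H, L (X + Y) = L X + L Y) ∧
        (∀ X ∈ H, ∀ c : ℝ, L (c • X) = c * L X)) ∧
      (∀ X ∈ H, IsGreatest ((fun L => L X) '' Q) (E X)) ∧
      ((∀ X ∈ H, ∀ Y ∈ H, (∀ ω, Y ω ≤ X ω) → E Y ≤ E X) →
        ∀ L ∈ Q, ∀ X ∈ H, ∀ Y ∈ H, (∀ ω, Y ω ≤ X ω) → L Y ≤ L X) ∧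
      ((∀ X ∈ H, ∀ Y ∈ H, (∀ ω, Y ω ≤ X ω) → E Y ≤ E X) →
        (∀ c : ℝ, E (fun _ => c) = c) →
        ∀ L ∈ Q, ∀ c : ℝ, L (fun _ => c) = c) :=
  stmt_0_general H Hconst Hadd Hsmul E hsub hpos
end

section
/- Let G : ℝᵈ × S(d) → ℝ satisfy: G(p + p̄, A + Ā) ≤ G(p, A) + G(p̄, Ā); G(λp, λA) = λG(p, A) for all λ ≥ 0; G(p, A) ≥ G(p, Ā) whenever A ≥ Ā; and G is continuous at (0, 0). Then there exists a bounded subset Θ ⊂ ℝᵈ × ℝ^{d×d} such that G(p, A) = sup_{(q,Q) ∈ Θ} [ ½ tr(A Q Qᵀ) + ⟨p, q⟩ ] for all (p, A) ∈ ℝᵈ × S(d). -/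
/-!
Extending `G` to all matrices through their symmetric part gives a sublinear functional on
`ℝᵈ × ℝ^{d×d}`, so by Hahn–Banach every value `G(p, A)` is attained by a linear functional
`g ≤ G`. Monotonicity makes `g` nonnegative on positive semidefinite matrices, hence its matrix
part is `A ↦ ½ tr(A L)` with `L = Q Qᵀ` positive semidefinite, and its vector part is `⟨·, q⟩`.
So `Θ` can be taken to be the set of all `(q, Q)` whose functional lies below `G`; continuity at
`(0, 0)` bounds `G` by `1` near the origin, which bounds `Θ`.
-/

open Matrix
open scoped InnerProductSpace MatrixOrder

theorem exists_linearMap_le_and_eq_of_sublinear {E : Type*} [AddCommGroup E] [Module ℝ E]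
    (N : E → ℝ) (N_hom : ∀ c : ℝ, 0 < c → ∀ x, N (c • x) = c * N x)
    (N_add : ∀ x y, N (x + y) ≤ N x + N y) (x₀ : E) :
    ∃ g : E →ₗ[ℝ] ℝ, (∀ x, g x ≤ N x) ∧ g x₀ = N x₀ := by
  have N_zero : N 0 = 0 := by
    have := N_hom 2 two_pos 0
    rw [smul_zero] at this
    linarith
  have smul_le : ∀ c : ℝ, c * N x₀ ≤ N (c • x₀) := by
    intro c
    rcases lt_trichotomy c 0 with hc | rfl | hc
    · have := N_add (c • x₀) ((-c) • x₀)
      rw [← add_smul, add_neg_cancel, zero_smul, N_zero, N_hom _ (neg_pos.2 hc)] at this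
      linarith
    · simp [N_zero]
    · exact (N_hom c hc x₀).ge
  have well_defined : ∀ c : ℝ, c • x₀ = 0 → c • N x₀ = 0 := by
    intro c hc
    have h₁ := smul_le c
    have h₂ := smul_le (-c)
    rw [hc, N_zero] at h₁
    rw [neg_smul, hc, neg_zero, N_zero] at h₂
    rw [smul_eq_mul]
    linarith
  let f : E →ₗ.[ℝ] ℝ := LinearPMap.mkSpanSingleton' x₀ (N x₀) well_defined
  obtain ⟨g, hg_ext, hg_le⟩ := exists_extension_of_le_sublinear f N N_hom N_add <| by
    rintro ⟨x, hx⟩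
    obtain ⟨c, rfl⟩ := Submodule.mem_span_singleton.1 hx
    rw [LinearPMap.mkSpanSingleton'_apply]
    exact smul_le c
  refine ⟨g, hg_le, ?_⟩
  rw [hg_ext ⟨x₀, Submodule.mem_span_singleton_self x₀⟩]
  exact LinearPMap.mkSpanSingleton'_apply_self _ _ _ _

theorem norm_mul_le_of_forall_inner_le {E : Type*} [NormedAddCommGroup E] [InnerProductSpace ℝ E]
    {q : E} {r C : ℝ} (hr : 0 ≤ r) (h : ∀ p, ‖p‖ ≤ r → ⟪p, q⟫_ℝ ≤ C) : r * ‖q‖ ≤ C := by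
  rcases eq_or_ne q 0 with rfl | hq
  · simpa using h 0 (by simpa using hr)
  · have hq' : 0 < ‖q‖ := norm_pos_iff.2 hq
    have := h ((r / ‖q‖) • q) (by rw [norm_smul, Real.norm_of_nonneg (by positivity),
      div_mul_cancel₀ _ hq'.ne'])
    rwa [real_inner_smul_left, real_inner_self_eq_norm_sq, div_mul_eq_mul_div, sq,
      ← mul_assoc, mul_div_assoc, div_self hq'.ne', mul_one] at this

namespace Matrix

theorem exists_eq_trace_transpose_mul {m n R : Type*} [Fintype m] [Fintype n]
    [DecidableEq m] [DecidableEq n] [CommSemiring R] (φ : Matrix m n R →ₗ[R] R) :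
    ∃ B : Matrix m n R, ∀ A, φ A = trace (Aᵀ * B) := by
  refine ⟨of fun i j => φ (single i j 1), fun A => ?_⟩
  conv_lhs => rw [matrix_eq_sum_single A]
  simp only [map_sum, trace, diag, mul_apply, transpose_apply, of_apply]
  rw [Finset.sum_comm]
  refine Finset.sum_congr rfl fun i _ => Finset.sum_congr rfl fun j _ => ?_
  rw [← smul_eq_mul, ← map_smul, smul_single, smul_eq_mul, mul_one]

theorem exists_eq_half_trace_mul_mul_transpose {n : Type*} [Fintype n] [DecidableEq n]
    (φ : Matrix n n ℝ →ₗ[ℝ] ℝ) (hφ : ∀ S, S.PosSemidef → 0 ≤ φ S) :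
    ∃ Q : Matrix n n ℝ, ∀ A, A.IsSymm → φ A = 1 / 2 * trace (A * (Q * Qᵀ)) := by
  obtain ⟨B, hB⟩ := exists_eq_trace_transpose_mul φ
  have hφ_symm : ∀ A, A.IsSymm → φ A = 1 / 2 * trace (A * (B + Bᵀ)) := by
    intro A hA
    have : trace (A * Bᵀ) = trace (A * B) := by
      rw [← trace_transpose, transpose_mul, transpose_transpose, hA.eq, trace_mul_comm]
    rw [hB, hA.eq, mul_add, trace_add, this]
    ring
  have hpsd : (B + Bᵀ).PosSemidef := by
    refine .of_dotProduct_mulVec_nonneg (isHermitian_iff_isSymm.2 (isSymm_add_transpose_self B))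
      fun x => ?_
    have hx := posSemidef_vecMulVec_self_star x
    have := hφ _ hx
    rw [hφ_symm _ (isHermitian_iff_isSymm.1 hx.isHermitian), vecMulVec_mul, trace_vecMulVec]
      at this
    rw [dotProduct_mulVec, dotProduct_comm]
    linarith
  obtain ⟨C, hC⟩ := CStarAlgebra.nonneg_iff_eq_star_mul_self.mp hpsd.nonneg
  refine ⟨Cᵀ, fun A hA => ?_⟩
  rw [hφ_symm A hA, hC, transpose_transpose, star_eq_conjTranspose,
    conjTranspose_eq_transpose_of_trivial]

theorem sq_apply_le_mul_transpose_apply_self {m n : Type*} [Fintype n]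
    (Q : Matrix m n ℝ) (i : m) (j : n) : Q i j ^ 2 ≤ (Q * Qᵀ) i i := by
  rw [mul_apply]
  simp_rw [transpose_apply, ← sq]
  exact Finset.single_le_sum (fun k _ => sq_nonneg (Q i k)) (Finset.mem_univ j)

theorem IsSymm.coe_selfAdjointPart {n : Type*} {A : Matrix n n ℝ} (hA : A.IsSymm) :
    (selfAdjointPart ℝ A : Matrix n n ℝ) = A :=
  IsSelfAdjoint.coe_selfAdjointPart_apply ℝ (isHermitian_iff_isSymm.2 hA)

theorem isSymm_coe_selfAdjointPart {n : Type*} (A : Matrix n n ℝ) :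
    (selfAdjointPart ℝ A : Matrix n n ℝ).IsSymm :=
  isHermitian_iff_isSymm.1 (selfAdjointPart ℝ A).2

end Matrix

section Representation

variable {n : Type*} [Fintype n]

noncomputable def pairing (z : EuclideanSpace ℝ n × Matrix n n ℝ) (p : EuclideanSpace ℝ n)
    (A : Matrix n n ℝ) : ℝ :=
  1 / 2 * trace (A * (z.2 * z.2ᵀ)) + ⟪p, z.1⟫_ℝ

theorem exists_pairing_eq_linearMap [DecidableEq n]
    (g : EuclideanSpace ℝ n × Matrix n n ℝ →ₗ[ℝ] ℝ)
    (hg : ∀ S : Matrix n n ℝ, S.PosSemidef → 0 ≤ g (0, S)) :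
    ∃ z, ∀ p A, A.IsSymm → pairing z p A = g (p, A) := by
  obtain ⟨Q, hQ⟩ := exists_eq_half_trace_mul_mul_transpose (g ∘ₗ LinearMap.inr ℝ _ _) hg
  let q := (InnerProductSpace.toDual ℝ _).symm (g ∘ₗ LinearMap.inl ℝ _ _).toContinuousLinearMap
  refine ⟨(q, Q), fun p A hA => ?_⟩
  have hpA : (p, A) = LinearMap.inl ℝ _ _ p + LinearMap.inr ℝ _ _ A := by simp
  rw [pairing, ← hQ A hA, real_inner_comm, InnerProductSpace.toDual_symm_apply, hpA, map_add,
    add_comm]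
  rfl

theorem exists_pairing_le_and_eq [DecidableEq n] {G : EuclideanSpace ℝ n → Matrix n n ℝ → ℝ}
    (hsub : ∀ p p' A A', A.IsSymm → A'.IsSymm → G (p + p') (A + A') ≤ G p A + G p' A')
    (hpos : ∀ p A, A.IsSymm → ∀ l : ℝ, 0 ≤ l → G (l • p) (l • A) = l * G p A)
    (hmono : ∀ p A A', A.IsSymm → A'.IsSymm → (A - A').PosSemidef → G p A' ≤ G p A)
    (p : EuclideanSpace ℝ n) (A : Matrix n n ℝ) (hA : A.IsSymm) :
    ∃ z, (∀ p A, A.IsSymm → pairing z p A ≤ G p A) ∧ pairing z p A = G p A := by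
  let N : EuclideanSpace ℝ n × Matrix n n ℝ → ℝ := fun x => G x.1 (selfAdjointPart ℝ x.2)
  have hN : ∀ p A, A.IsSymm → N (p, A) = G p A := fun p A hA => by
    simp only [N, hA.coe_selfAdjointPart]
  obtain ⟨g, hgN, hgpA⟩ := exists_linearMap_le_and_eq_of_sublinear N
    (fun c hc x => by
      simp only [N, Prod.smul_fst, Prod.smul_snd, map_smul, selfAdjoint.val_smul]
      exact hpos x.1 _ (isSymm_coe_selfAdjointPart x.2) c hc.le)
    (fun x y => by
      simp only [N, Prod.fst_add, Prod.snd_add, map_add, AddSubgroup.coe_add]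
      exact hsub x.1 y.1 _ _ (isSymm_coe_selfAdjointPart x.2) (isSymm_coe_selfAdjointPart y.2))
    (p, A)
  have hG0 : G 0 0 = 0 := by simpa using hpos 0 0 isSymm_zero 0 le_rfl
  have hg : ∀ S : Matrix n n ℝ, S.PosSemidef → 0 ≤ g (0, S) := by
    intro S hS
    have hS' : (-S).IsSymm := (isHermitian_iff_isSymm.1 hS.isHermitian).neg
    have h₁ : g (0, -S) ≤ G 0 0 := (hgN _).trans <| (hN 0 _ hS').trans_le <|
      hmono 0 0 (-S) isSymm_zero hS' (by simpa using hS)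
    have h₂ : g (0, -S) = -g (0, S) := by
      rw [← map_neg, Prod.neg_mk, neg_zero]
    linarith
  obtain ⟨z, hz⟩ := exists_pairing_eq_linearMap g hg
  exact ⟨z, fun p A hA => (hz p A hA).trans_le ((hgN _).trans_eq (hN p A hA)),
    by rw [hz p A hA, hgpA, hN p A hA]⟩

theorem norm_le_and_abs_apply_le_of_pairing_le [DecidableEq n] {G : EuclideanSpace ℝ n → Matrix n n ℝ → ℝ} {δ : ℝ}
    (hδ : 0 < δ) (hG : ∀ p A, A.IsSymm → ‖p‖ < δ → (∀ i j, |A i j| < δ) → G p A < 1)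
    {z : EuclideanSpace ℝ n × Matrix n n ℝ} (hz : ∀ p A, A.IsSymm → pairing z p A ≤ G p A) :
    ‖z.1‖ ≤ 2 / δ ∧ ∀ i j, |z.2 i j| ≤ √(4 / δ) := by
  obtain ⟨q, Q⟩ := z
  constructor
  · have : δ / 2 * ‖q‖ ≤ 1 := norm_mul_le_of_forall_inner_le (by positivity) fun p hp => by
      have h₁ := hz p 0 isSymm_zero
      have h₂ := hG p 0 isSymm_zero (by linarith) fun _ _ => by simpa using hδ
      simp only [pairing, zero_mul, trace_zero, mul_zero, zero_add] at h₁
      linarith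
    rw [le_div_iff₀ hδ]
    linarith
  · intro i j
    have hA : (single i i (δ / 2)).IsSymm := by simp [IsSymm, transpose_single]
    have h₁ := hz 0 _ hA
    have h₂ := hG 0 _ hA (by simpa using hδ) fun k l => by
      rw [single_apply]
      split_ifs
      · rw [abs_of_pos (half_pos hδ)]
        exact half_lt_self hδ
      · simpa using hδ
    simp only [pairing, trace_single_mul, smul_eq_mul, inner_zero_left, add_zero] at h₁
    have := sq_apply_le_mul_transpose_apply_self Q i j
    apply Real.abs_le_sqrt
    rw [le_div_iff₀ hδ]
    nlinarith

end Representation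

/-- Representation theorem for a sublinear function `G` on `ℝᵈ × S(d)` that is monotone
in the matrix argument and continuous at `(0,0)`: there is a bounded set
`Θ ⊂ ℝᵈ × ℝ^{d×d}` with `G(p, A) = sup_{(q,Q) ∈ Θ} [½ tr(A Q Qᵀ) + ⟨p, q⟩]`. -/
theorem stmt_3 {d : ℕ}
    (G : EuclideanSpace ℝ (Fin d) → Matrix (Fin d) (Fin d) ℝ → ℝ)
    (hsub : ∀ p p' A A', A.IsSymm → A'.IsSymm →
      G (p + p') (A + A') ≤ G p A + G p' A')
    (hpos : ∀ p A, A.IsSymm → ∀ l : ℝ, 0 ≤ l → G (l • p) (l • A) = l * G p A)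
    (hmono : ∀ p A A', A.IsSymm → A'.IsSymm → (A - A').PosSemidef → G p A' ≤ G p A)
    (hcont : ∀ ε > (0 : ℝ), ∃ δ > (0 : ℝ), ∀ p A, A.IsSymm →
      ‖p‖ < δ → (∀ i j, |A i j| < δ) → |G p A - G 0 0| < ε) :
    ∃ Θ : Set (EuclideanSpace ℝ (Fin d) × Matrix (Fin d) (Fin d) ℝ),
      (∃ M : ℝ, ∀ z ∈ Θ, ‖z.1‖ ≤ M ∧ ∀ i j, |z.2 i j| ≤ M) ∧
      ∀ p A, A.IsSymm →
        IsLUB {r : ℝ | ∃ z ∈ Θ,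
          r = (1 / 2) * Matrix.trace (A * (z.2 * z.2.transpose)) + (inner ℝ p z.1 : ℝ)} (G p A) := by
  obtain ⟨δ, hδ, hG⟩ := hcont 1 one_pos
  have hG0 : G 0 0 = 0 := by simpa using hpos 0 0 isSymm_zero 0 le_rfl
  have hG_lt : ∀ p A, A.IsSymm → ‖p‖ < δ → (∀ i j, |A i j| < δ) → G p A < 1 :=
    fun p A hA hp hA' => by simpa [hG0] using (le_abs_self _).trans_lt (hG p A hA hp hA')
  refine ⟨{z | ∀ p A, A.IsSymm → pairing z p A ≤ G p A}, ⟨max (2 / δ) √(4 / δ), fun z hz => ?_⟩,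
    fun p A hA => ⟨?_, ?_⟩⟩
  · obtain ⟨hq, hQ⟩ := norm_le_and_abs_apply_le_of_pairing_le hδ hG_lt hz
    exact ⟨hq.trans (le_max_left _ _), fun i j => (hQ i j).trans (le_max_right _ _)⟩
  · rintro r ⟨z, hz, rfl⟩
    exact hz p A hA
  · intro b hb
    obtain ⟨z, hz, hzpA⟩ := exists_pairing_le_and_eq hsub hpos hmono p A hA
    exact hb ⟨z, hz, hzpA.symm⟩
end

section
/- Let (X, Y) be a G-distributed pair of d-dimensional random vectors on a sublinear expectation space (Ω, H, Ê). For φ ∈ C_{l.Lip}(ℝᵈ × ℝᵈ) define u(t, x, y) := Ê[φ(x + √t X, y + tY)] for (t, x, y) ∈ [0, ∞) × ℝᵈ × ℝᵈ. Then for all s, t ≥ 0 and x, y ∈ ℝᵈ the dynamic programming principle holds: u(t + s, x, y) = Ê[u(t, x + √s X, y + sY)]. -/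
noncomputable section

open Real Set

/-- The class `C_{l.Lip}`: locally Lipschitz functions with polynomial growth of the
Lipschitz constant. -/
def LocLip {V : Type*} [SeminormedAddGroup V] (φ : V → ℝ) : Prop :=
  ∃ C : ℝ, 0 < C ∧ ∃ m : ℕ, ∀ x y : V, |φ x - φ y| ≤ C * (1 + ‖x‖ ^ m + ‖y‖ ^ m) * ‖x - y‖

/-- A sublinear expectation space on a set `Ω`. -/
structure SublinExp (Ω : Type*) where
  H : Set (Ω → ℝ)
  E : (Ω → ℝ) → ℝ
  const_mem : ∀ c : ℝ, (fun _ => c) ∈ H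
  comp_mem : ∀ (n : ℕ) (X : Fin n → Ω → ℝ), (∀ i, X i ∈ H) →
    ∀ φ : (Fin n → ℝ) → ℝ, LocLip φ → (fun ω => φ (fun i => X i ω)) ∈ H
  mono : ∀ X ∈ H, ∀ Y ∈ H, (∀ ω, Y ω ≤ X ω) → E Y ≤ E X
  const_eq : ∀ c : ℝ, E (fun _ => c) = c
  subadd : ∀ X ∈ H, ∀ Y ∈ H, E X - E Y ≤ E (fun ω => X ω - Y ω)
  pos_hom : ∀ X ∈ H, ∀ l : ℝ, 0 ≤ l → E (fun ω => l * X ω) = l * E X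

/-- `X` is a random vector on the sublinear expectation space `S`. -/
def IsRV {Ω V : Type*} [SeminormedAddGroup V] (S : SublinExp Ω) (X : Ω → V) : Prop :=
  ∀ φ : V → ℝ, LocLip φ → (fun ω => φ (X ω)) ∈ S.H

/-- `X₁` (on `S₁`) and `X₂` (on `S₂`) are identically distributed. -/
def SameDistrib {Ω₁ Ω₂ V : Type*} [SeminormedAddGroup V]
    (S₁ : SublinExp Ω₁) (S₂ : SublinExp Ω₂) (X₁ : Ω₁ → V) (X₂ : Ω₂ → V) : Prop :=
  ∀ φ : V → ℝ, LocLip φ → S₁.E (fun ω => φ (X₁ ω)) = S₂.E (fun ω => φ (X₂ ω))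

/-- `Y` is independent to `X` under the sublinear expectation `S`. -/
def IndepTo {Ω U V : Type*} [SeminormedAddGroup U] [SeminormedAddGroup V]
    (S : SublinExp Ω) (Y : Ω → V) (X : Ω → U) : Prop :=
  ∀ φ : U × V → ℝ, LocLip φ →
    S.E (fun ω => φ (X ω, Y ω)) = S.E (fun ω => S.E (fun ω' => φ (X ω, Y ω')))

/-- `X'` is an independent copy of `X`. -/
def IsIndepCopy {Ω V : Type*} [SeminormedAddGroup V] (S : SublinExp Ω)
    (X X' : Ω → V) : Prop :=
  SameDistrib S S X X' ∧ IndepTo S X' X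

/-- The pair `(X, Y)` of `d`-dimensional random vectors is `G`-distributed. -/
def IsGDistributed {Ω : Type*} {d : ℕ} (S : SublinExp Ω)
    (X Y : Ω → EuclideanSpace ℝ (Fin d)) : Prop :=
  IsRV S (fun ω => (X ω, Y ω)) ∧
  ∃ Xb Yb : Ω → EuclideanSpace ℝ (Fin d),
    IsIndepCopy S (fun ω => (X ω, Y ω)) (fun ω => (Xb ω, Yb ω)) ∧
    ∀ a b : ℝ, 0 ≤ a → 0 ≤ b →
      SameDistrib S S
        (fun ω => (a • X ω + b • Xb ω, a ^ 2 • Y ω + b ^ 2 • Yb ω))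
        (fun ω => (Real.sqrt (a ^ 2 + b ^ 2) • X ω, (a ^ 2 + b ^ 2) • Y ω))

/-- The sublinear function `G(p, A) = Ê[½⟨AX, X⟩ + ⟨p, Y⟩]` generated by the pair `(X, Y)`. -/
def Gfun {Ω : Type*} {d : ℕ} (S : SublinExp Ω) (X Y : Ω → EuclideanSpace ℝ (Fin d))
    (p : EuclideanSpace ℝ (Fin d)) (A : Matrix (Fin d) (Fin d) ℝ) : ℝ :=
  S.E (fun ω => (1 / 2) * (inner ℝ (Matrix.toEuclideanLin A (X ω)) (X ω) : ℝ)
      + (inner ℝ p (Y ω) : ℝ))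


/-!
Write `δ_t (x, y) = (√t x, t y)`, so that `u(t, z) = Ê[φ(z + δ_t (X, Y))]`. With an independent
copy `(X̄, Ȳ)`, the defining scaling property (for `a = √s`, `b = √t`) says that
`δ_s (X, Y) + δ_t (X̄, Ȳ)` has the law of `δ_{s+t} (X, Y)`. Independence then lets us compute
`Ê[φ(z + δ_s (X, Y) + δ_t (X̄, Ȳ))]` by first freezing `(X, Y)`, and since `(X̄, Ȳ)` has the
law of `(X, Y)` the inner expectation is `u(t, z + δ_s (X, Y))`. Every function in sight is of the
form `φ ∘ g` with `g` Lipschitz, which keeps it in `C_{l.Lip}`.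
-/

open scoped NNReal

theorem LipschitzWith.exists_one_add_norm_pow_le {V W : Type*} [SeminormedAddCommGroup V]
    [SeminormedAddCommGroup W] {K : ℝ≥0} {g : V → W} (hg : LipschitzWith K g) (m : ℕ) :
    ∃ B : ℝ, 0 < B ∧ ∀ z, 1 + ‖g z‖ ^ m ≤ B * (1 + ‖z‖ ^ m) := by
  set A : ℝ := ‖g 0‖ + K
  refine ⟨1 + A ^ m * 2 ^ (m - 1), by positivity, fun z => ?_⟩
  have hgz : ‖g z‖ ≤ A * (1 + ‖z‖) := by
    have h := hg.dist_le_mul z 0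
    rw [dist_eq_norm, dist_eq_norm, sub_zero] at h
    have := norm_le_insert' (g z) (g 0)
    nlinarith [norm_nonneg z, norm_nonneg (g 0), K.coe_nonneg]
  have hpow : ‖g z‖ ^ m ≤ A ^ m * (2 ^ (m - 1) * (1 + ‖z‖ ^ m)) := by
    calc ‖g z‖ ^ m ≤ (A * (1 + ‖z‖)) ^ m := by gcongr
      _ = A ^ m * (1 + ‖z‖) ^ m := mul_pow _ _ _
      _ ≤ A ^ m * (2 ^ (m - 1) * (1 + ‖z‖ ^ m)) := by
          gcongr
          simpa using add_pow_le zero_le_one (norm_nonneg z) m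
  nlinarith [pow_nonneg (norm_nonneg z) m]

theorem LocLip.comp_lipschitzWith {V W : Type*} [SeminormedAddCommGroup V]
    [SeminormedAddCommGroup W] {φ : W → ℝ} (hφ : LocLip φ) {K : ℝ≥0} {g : V → W}
    (hg : LipschitzWith K g) :
    LocLip (fun z => φ (g z)) := by
  obtain ⟨C, hC, m, hφ⟩ := hφ
  obtain ⟨B, hB, hgm⟩ := hg.exists_one_add_norm_pow_le m
  refine ⟨C * (2 * B) * (K + 1), by positivity, m, fun z z' => ?_⟩
  have hgrowth : 1 + ‖g z‖ ^ m + ‖g z'‖ ^ m ≤ 2 * B * (1 + ‖z‖ ^ m + ‖z'‖ ^ m) := by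
    nlinarith [hgm z, hgm z', pow_nonneg (norm_nonneg z) m, pow_nonneg (norm_nonneg z') m]
  have hdist : ‖g z - g z'‖ ≤ (K + 1) * ‖z - z'‖ := by
    have := hg.dist_le_mul z z'
    rw [dist_eq_norm, dist_eq_norm] at this
    nlinarith [norm_nonneg (z - z')]
  calc |φ (g z) - φ (g z')| ≤ C * (1 + ‖g z‖ ^ m + ‖g z'‖ ^ m) * ‖g z - g z'‖ := hφ _ _
    _ ≤ C * (2 * B * (1 + ‖z‖ ^ m + ‖z'‖ ^ m)) * ((K + 1) * ‖z - z'‖) := by gcongr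
    _ = C * (2 * B) * (K + 1) * (1 + ‖z‖ ^ m + ‖z'‖ ^ m) * ‖z - z'‖ := by ring

theorem IsIndepCopy.E_eq_E_E {Ω W : Type*} [SeminormedAddCommGroup W] {S : SublinExp Ω}
    {V V' : Ω → W} (h : IsIndepCopy S V V') {ψ : W × W → ℝ} (hψ : LocLip ψ) :
    S.E (fun ω => ψ (V ω, V' ω)) = S.E (fun ω => S.E (fun ω' => ψ (V ω, V ω'))) := by
  rw [h.2 ψ hψ]
  congr 1
  funext ω
  exact (h.1 _ (hψ.comp_lipschitzWith (LipschitzWith.prodMk_left (V ω)))).symm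

def parabolicDilation {E : Type*} [SeminormedAddCommGroup E] [NormedSpace ℝ E] (t : ℝ)
    (v : E × E) : E × E :=
  (Real.sqrt t • v.1, t • v.2)

theorem lipschitzWith_parabolicDilation {E : Type*} [SeminormedAddCommGroup E]
    [NormedSpace ℝ E] (t : ℝ) :
    LipschitzWith (max ‖Real.sqrt t‖₊ ‖t‖₊) (parabolicDilation (E := E) t) := by
  have h := ((lipschitzWith_smul (β := E) (Real.sqrt t)).comp LipschitzWith.prod_fst).prodMk
    ((lipschitzWith_smul (β := E) t).comp LipschitzWith.prod_snd)
  rw [mul_one, mul_one] at h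
  exact h

theorem IsGDistributed.exists_indepCopy_sameDistrib {Ω : Type*} {d : ℕ} {S : SublinExp Ω}
    {X Y : Ω → EuclideanSpace ℝ (Fin d)} (hG : IsGDistributed S X Y) :
    ∃ Xb Yb : Ω → EuclideanSpace ℝ (Fin d),
      IsIndepCopy S (fun ω => (X ω, Y ω)) (fun ω => (Xb ω, Yb ω)) ∧
      ∀ s t : ℝ, 0 ≤ s → 0 ≤ t →
        SameDistrib S S
          (fun ω => parabolicDilation s (X ω, Y ω) + parabolicDilation t (Xb ω, Yb ω))
          (fun ω => parabolicDilation (s + t) (X ω, Y ω)) := by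
  obtain ⟨-, Xb, Yb, hcopy, hscale⟩ := hG
  refine ⟨Xb, Yb, hcopy, fun s t hs ht => ?_⟩
  have h := hscale _ _ (Real.sqrt_nonneg s) (Real.sqrt_nonneg t)
  rwa [Real.sq_sqrt hs, Real.sq_sqrt ht] at h

/-- Dynamic programming principle for `u(t,x,y) = Ê[φ(x + √t X, y + t Y)]` when
`(X, Y)` is `G`-distributed. -/
theorem stmt_6 {Ω : Type*} {d : ℕ} (S : SublinExp Ω)
    (X Y : Ω → EuclideanSpace ℝ (Fin d)) (hG : IsGDistributed S X Y)
    (φ : EuclideanSpace ℝ (Fin d) × EuclideanSpace ℝ (Fin d) → ℝ) (hφ : LocLip φ)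
    (u : ℝ → EuclideanSpace ℝ (Fin d) → EuclideanSpace ℝ (Fin d) → ℝ)
    (hu : ∀ t x y, u t x y =
      S.E (fun ω => φ (x + Real.sqrt t • X ω, y + t • Y ω))) :
    ∀ t s : ℝ, 0 ≤ t → 0 ≤ s → ∀ x y,
      u (t + s) x y = S.E (fun ω => u t (x + Real.sqrt s • X ω) (y + s • Y ω)) := by
  obtain ⟨Xb, Yb, hcopy, hsplit⟩ := hG.exists_indepCopy_sameDistrib
  intro t s ht hs x y
  have hu' : ∀ r x y, u r x y = S.E (fun ω => φ ((x, y) + parabolicDilation r (X ω, Y ω))) :=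
    hu
  set ψ := fun v : (EuclideanSpace ℝ (Fin d) × EuclideanSpace ℝ (Fin d)) ×
      (EuclideanSpace ℝ (Fin d) × EuclideanSpace ℝ (Fin d)) =>
    φ ((x, y) + parabolicDilation s v.1 + parabolicDilation t v.2)
  have hψ : LocLip ψ := hφ.comp_lipschitzWith <|
    ((LipschitzWith.const _).add ((lipschitzWith_parabolicDilation s).comp
      LipschitzWith.prod_fst)).add ((lipschitzWith_parabolicDilation t).comp LipschitzWith.prod_snd)
  calc u (t + s) x y
      = S.E (fun ω => φ ((x, y) + parabolicDilation (s + t) (X ω, Y ω))) := by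
        rw [hu', add_comm]
    _ = S.E (fun ω => ψ ((X ω, Y ω), (Xb ω, Yb ω))) := by
        simp only [ψ, add_assoc]
        exact (hsplit s t hs ht _
          (hφ.comp_lipschitzWith (isometry_add_left (x, y)).lipschitz)).symm
    _ = S.E (fun ω => S.E (fun ω' => ψ ((X ω, Y ω), (X ω', Y ω')))) := hcopy.E_eq_E_E hψ
    _ = S.E (fun ω => u t (x + Real.sqrt s • X ω) (y + s • Y ω)) := by
        simp only [hu']
        rfl
end
end

section
/- Let (X, Y) be a G-distributed pair of d-dimensional random vectors on a sublinear expectation space (Ω, H, Ê), let φ ∈ C_{l.Lip}(ℝᵈ × ℝᵈ), and define u(t, x, y) := Ê[φ(x + √t X, y + tY)]. Then for each T > 0 there exist constants C, k > 0 such that for all t, s ∈ [0, T] with t + s ∈ [0, T] and all x, y, x̄, ȳ ∈ ℝᵈ: |u(t, x, y) − u(t, x̄, ȳ)| ≤ C(1 + |x|^k + |y|^k + |x̄|^k + |ȳ|^k)(|x − x̄| + |y − ȳ|), and |u(t, x, y) − u(t + s, x, y)| ≤ C(1 + |x|^k + |y|^k)(s + s^{1/2}). -/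
noncomputable section

open Real Set

/-!
Write `V = (X, Y)`, `P_t (v₁, v₂) = (√t v₁, t v₂)` and `u t z = Ê[φ (z + P_t V)]`. Since
`‖P_t‖ ≤ t + √t`, the map `(z, v) ↦ φ (z + P_t v)` is in `C_{l.Lip}` with constants uniform in
`t ∈ [0, T]`, and taking `Ê` in `v` keeps the estimate in `z`, at the price of a polynomial
moment of `V`: this is the spatial estimate. For the time estimate, `G`-distribution and
independence give the semigroup identity `u (t + s) z = Ê[u s (z + P_t V)]`, so
`u t z - u (t + s) z` is controlled by `|φ z' - u s z'| ≤ C (1 + ‖z'‖^m) (s + √s)` at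
`z' = z + P_t V`, which holds because the increment `P_s V` has norm at most `(s + √s) ‖V‖`.
-/

def LocLipWith {V : Type*} [SeminormedAddGroup V] (C : ℝ) (m : ℕ) (φ : V → ℝ) : Prop :=
  ∀ x y : V, |φ x - φ y| ≤ C * (1 + ‖x‖ ^ m + ‖y‖ ^ m) * ‖x - y‖

lemma pow_le_one_add_pow {a : ℝ} (ha : 0 ≤ a) {m n : ℕ} (hmn : m ≤ n) : a ^ m ≤ 1 + a ^ n := by
  rcases le_total a 1 with h | h
  · linarith [pow_le_one₀ ha h (n := m), pow_nonneg ha n]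
  · linarith [pow_le_pow_right₀ h hmn]

lemma norm_prod_pow_le {E F : Type*} [SeminormedAddGroup E] [SeminormedAddGroup F] (x : E × F)
    (m : ℕ) : ‖x‖ ^ m ≤ ‖x.1‖ ^ m + ‖x.2‖ ^ m := by
  rw [Prod.norm_def]
  rcases le_total ‖x.1‖ ‖x.2‖ with h | h
  · rw [max_eq_right h]
    linarith [pow_nonneg (norm_nonneg x.1) m]
  · rw [max_eq_left h]
    linarith [pow_nonneg (norm_nonneg x.2) m]

lemma norm_prod_le_add {E F : Type*} [SeminormedAddGroup E] [SeminormedAddGroup F] (x : E × F) :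
    ‖x‖ ≤ ‖x.1‖ + ‖x.2‖ :=
  max_le_add_of_nonneg (norm_nonneg _) (norm_nonneg _)

section LocLip

variable {V : Type*} [SeminormedAddCommGroup V] {φ : V → ℝ} {C C' : ℝ} {m : ℕ}

lemma LocLipWith.mono (h : LocLipWith C m φ) (hC : C ≤ C') : LocLipWith C' m φ :=
  fun x y => (h x y).trans (by gcongr)

lemma LocLipWith.locLip (h : LocLipWith C m φ) : LocLip φ :=
  ⟨max C 1, by positivity, m, h.mono (le_max_left _ _)⟩

lemma LocLip.exists_locLipWith_pos (h : LocLip φ) : ∃ C, 0 < C ∧ ∃ m, 0 < m ∧ LocLipWith C m φ := by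
  obtain ⟨C, hC, m, h⟩ := h
  refine ⟨3 * C, by positivity, m + 1, m.succ_pos, fun x y => (h x y).trans ?_⟩
  have hx := pow_le_one_add_pow (norm_nonneg x) (m.le_add_right 1)
  have hy := pow_le_one_add_pow (norm_nonneg y) (m.le_add_right 1)
  have : 0 ≤ ‖x‖ ^ (m + 1) + ‖y‖ ^ (m + 1) := by positivity
  calc C * (1 + ‖x‖ ^ m + ‖y‖ ^ m) * ‖x - y‖
      ≤ C * (3 * (1 + ‖x‖ ^ (m + 1) + ‖y‖ ^ (m + 1))) * ‖x - y‖ := by gcongr; linarith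
    _ = _ := by ring

lemma LipschitzWith.locLip {K : NNReal} (h : LipschitzWith K φ) : LocLip φ := by
  refine ⟨K + 1, by positivity, 0, fun x y => ?_⟩
  have := h.dist_le_mul x y
  rw [Real.dist_eq, dist_eq_norm] at this
  nlinarith [norm_nonneg (x - y), K.coe_nonneg]

lemma locLip_one_add_norm_pow (j : ℕ) : LocLip fun v : V => 1 + ‖v‖ ^ j := by
  refine LocLipWith.locLip (C := j) (m := j) fun x y => ?_
  have hmax : max |‖x‖| |‖y‖| ^ (j - 1) ≤ 1 + ‖x‖ ^ j + ‖y‖ ^ j := by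
    rw [abs_norm, abs_norm]
    rcases le_total ‖x‖ ‖y‖ with h | h
    · rw [max_eq_right h]
      linarith [pow_le_one_add_pow (norm_nonneg y) (j.sub_le 1), pow_nonneg (norm_nonneg x) j]
    · rw [max_eq_left h]
      linarith [pow_le_one_add_pow (norm_nonneg x) (j.sub_le 1), pow_nonneg (norm_nonneg y) j]
  calc |1 + ‖x‖ ^ j - (1 + ‖y‖ ^ j)| = |‖x‖ ^ j - ‖y‖ ^ j| := by ring_nf
    _ ≤ |‖x‖ - ‖y‖| * j * max |‖x‖| |‖y‖| ^ (j - 1) := abs_pow_sub_pow_le _ _ _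
    _ ≤ ‖x - y‖ * j * (1 + ‖x‖ ^ j + ‖y‖ ^ j) := by gcongr; exact abs_norm_sub_norm_le x y
    _ = j * (1 + ‖x‖ ^ j + ‖y‖ ^ j) * ‖x - y‖ := by ring

end LocLip

namespace SublinExp

variable {Ω : Type*} (S : SublinExp Ω)

lemma sub_mem {X Y : Ω → ℝ} (hX : X ∈ S.H) (hY : Y ∈ S.H) : (fun ω => X ω - Y ω) ∈ S.H := by
  have hsub : LocLip fun p : Fin 2 → ℝ => p 0 - p 1 :=
    ((LipschitzWith.eval 0).sub (LipschitzWith.eval 1)).locLip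
  simpa using S.comp_mem 2 ![X, Y] (by simp [Fin.forall_fin_two, hX, hY]) _ hsub

lemma const_mul_mem (c : ℝ) {X : Ω → ℝ} (hX : X ∈ S.H) : (fun ω => c * X ω) ∈ S.H := by
  have hmul : LocLip fun p : Fin 1 → ℝ => c * p 0 :=
    ((lipschitzWith_smul c).comp (LipschitzWith.eval 0)).locLip
  simpa using S.comp_mem 1 ![X] (by simp [hX]) _ hmul

lemma const_le_E {X : Ω → ℝ} (hX : X ∈ S.H) {c : ℝ} (h : ∀ ω, c ≤ X ω) : c ≤ S.E X := by
  simpa [S.const_eq] using S.mono X hX _ (S.const_mem c) h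

lemma abs_E_sub_le {X Y Z : Ω → ℝ} (hX : X ∈ S.H) (hY : Y ∈ S.H) (hZ : Z ∈ S.H)
    (h : ∀ ω, |X ω - Y ω| ≤ Z ω) : |S.E X - S.E Y| ≤ S.E Z := by
  rw [abs_le]
  constructor
  · have := S.subadd Y hY X hX
    have := S.mono Z hZ _ (S.sub_mem hY hX) fun ω => by linarith [neg_abs_le (X ω - Y ω), h ω]
    linarith
  · exact (S.subadd X hX Y hY).trans <|
      S.mono Z hZ _ (S.sub_mem hX hY) fun ω => (le_abs_self _).trans (h ω)

variable {W : Type*} [SeminormedAddCommGroup W]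

def moment (V : Ω → W) (j : ℕ) : ℝ := S.E fun ω => 1 + ‖V ω‖ ^ j

variable {V : Ω → W}

lemma one_le_moment (hV : IsRV S V) (j : ℕ) : 1 ≤ S.moment V j :=
  S.const_le_E (hV _ (locLip_one_add_norm_pow j)) fun ω => by
    linarith [pow_nonneg (norm_nonneg (V ω)) j]

lemma abs_E_sub_le_mul_moment (hV : IsRV S V) {f g : W → ℝ} (hf : LocLip f) (hg : LocLip g)
    {c : ℝ} (hc : 0 ≤ c) {j : ℕ} (h : ∀ v, |f v - g v| ≤ c * (1 + ‖v‖ ^ j)) :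
    |S.E (fun ω => f (V ω)) - S.E (fun ω => g (V ω))| ≤ c * S.moment V j := by
  have hρ := hV _ (locLip_one_add_norm_pow j)
  rw [moment, ← S.pos_hom _ hρ c hc]
  exact S.abs_E_sub_le (hV f hf) (hV g hg) (S.const_mul_mem c hρ) fun ω => h (V ω)

end SublinExp

lemma LocLip.comp_prodMk {Z W : Type*} [SeminormedAddCommGroup Z] [SeminormedAddCommGroup W]
    {Φ : Z × W → ℝ} (hΦ : LocLip Φ) (z : Z) : LocLip fun w => Φ (z, w) := by
  obtain ⟨C, hC, m, h⟩ := hΦ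
  refine ⟨2 * C * (1 + ‖z‖ ^ m), by positivity, m, fun w w' => ?_⟩
  have hw := norm_prod_pow_le (z, w) m
  have hw' := norm_prod_pow_le (z, w') m
  have : 0 ≤ ‖z‖ ^ m * (‖w‖ ^ m + ‖w'‖ ^ m) := by positivity
  calc |Φ (z, w) - Φ (z, w')| ≤ C * (1 + ‖(z, w)‖ ^ m + ‖(z, w')‖ ^ m) * ‖(z, w) - (z, w')‖ :=
        h _ _
    _ ≤ C * (2 * (1 + ‖z‖ ^ m) * (1 + ‖w‖ ^ m + ‖w'‖ ^ m)) * ‖w - w'‖ := by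
        gcongr
        · dsimp only at hw hw'
          nlinarith [pow_nonneg (norm_nonneg w) m, pow_nonneg (norm_nonneg w') m]
        · simp
    _ = _ := by ring

section Composition

variable {Z W : Type*} [SeminormedAddCommGroup Z] [NormedSpace ℝ Z]
  [SeminormedAddCommGroup W] [NormedSpace ℝ W] {A : Z →L[ℝ] W} {K : ℝ}

lemma norm_fst_add_apply_snd_le (hA : ‖A‖ ≤ K) (p : W × Z) : ‖p.1 + A p.2‖ ≤ (1 + K) * ‖p‖ :=
  calc ‖p.1 + A p.2‖ ≤ ‖p.1‖ + K * ‖p.2‖ :=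
        (norm_add_le _ _).trans (by gcongr; exact A.le_of_opNorm_le hA _)
    _ ≤ ‖p‖ + K * ‖p‖ := by
        have := (norm_nonneg A).trans hA
        gcongr
        exacts [norm_fst_le p, norm_snd_le p]
    _ = (1 + K) * ‖p‖ := by ring

lemma one_add_norm_add_apply_pow_le (hA : ‖A‖ ≤ K) (z : W) (v : Z) (m : ℕ) :
    1 + ‖z + A v‖ ^ m ≤ (1 + K) ^ m * ((1 + ‖z‖ ^ m) * (1 + ‖v‖ ^ m)) := by
  have hK : 1 ≤ (1 + K) ^ m := one_le_pow₀ (by linarith [(norm_nonneg A).trans hA])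
  have hzv := norm_prod_pow_le (z, v) m
  dsimp only at hzv
  have : ‖z + A v‖ ^ m ≤ (1 + K) ^ m * (‖z‖ ^ m + ‖v‖ ^ m) := by
    calc ‖z + A v‖ ^ m ≤ ((1 + K) * ‖(z, v)‖) ^ m := by
          gcongr; exact norm_fst_add_apply_snd_le hA (z, v)
      _ ≤ _ := by rw [mul_pow]; gcongr
  nlinarith [pow_nonneg (norm_nonneg z) m, pow_nonneg (norm_nonneg v) m,
    mul_nonneg (pow_nonneg (norm_nonneg z) m) (pow_nonneg (norm_nonneg v) m)]

lemma LocLipWith.comp_fst_add_apply_snd {φ : W → ℝ} {C : ℝ} {m : ℕ} (hφ : LocLipWith C m φ)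
    (hC : 0 ≤ C) (hA : ‖A‖ ≤ K) :
    LocLipWith (C * (1 + K) ^ (m + 1)) m fun p : W × Z => φ (p.1 + A p.2) := by
  intro p q
  have hK : 0 ≤ K := (norm_nonneg A).trans hA
  have hKm : 1 ≤ (1 + K) ^ m := one_le_pow₀ (by linarith)
  have hsub : p.1 + A p.2 - (q.1 + A q.2) = (p - q).1 + A (p - q).2 := by
    simp only [Prod.fst_sub, Prod.snd_sub, map_sub]; abel
  have hpq : 1 + ((1 + K) * ‖p‖) ^ m + ((1 + K) * ‖q‖) ^ m ≤
      (1 + K) ^ m * (1 + ‖p‖ ^ m + ‖q‖ ^ m) := by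
    rw [mul_pow, mul_pow]; nlinarith
  calc |φ (p.1 + A p.2) - φ (q.1 + A q.2)|
      ≤ C * (1 + ‖p.1 + A p.2‖ ^ m + ‖q.1 + A q.2‖ ^ m) * ‖p.1 + A p.2 - (q.1 + A q.2)‖ :=
        hφ _ _
    _ ≤ C * (1 + ((1 + K) * ‖p‖) ^ m + ((1 + K) * ‖q‖) ^ m) * ((1 + K) * ‖p - q‖) := by
        rw [hsub]
        gcongr <;> exact norm_fst_add_apply_snd_le hA _
    _ ≤ C * ((1 + K) ^ m * (1 + ‖p‖ ^ m + ‖q‖ ^ m)) * ((1 + K) * ‖p - q‖) := by gcongr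
    _ = C * (1 + K) ^ (m + 1) * (1 + ‖p‖ ^ m + ‖q‖ ^ m) * ‖p - q‖ := by ring

lemma LocLip.comp_add_apply {φ : W → ℝ} (hφ : LocLip φ) (z : W) (A : Z →L[ℝ] W) :
    LocLip fun v => φ (z + A v) := by
  obtain ⟨C, hC, m, h⟩ := hφ
  exact (LocLipWith.comp_fst_add_apply_snd h hC.le (le_refl ‖A‖)).locLip.comp_prodMk z

end Composition

lemma LocLipWith.E_comp_prodMk {Ω Z W : Type*} [SeminormedAddCommGroup Z]
    [SeminormedAddCommGroup W] (S : SublinExp Ω) {V : Ω → W} (hV : IsRV S V) {Φ : Z × W → ℝ}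
    {C : ℝ} {m : ℕ} (hΦ : LocLipWith C m Φ) (hC : 0 ≤ C) :
    LocLipWith (2 * C * S.moment V m) m fun z => S.E fun ω => Φ (z, V ω) := by
  intro z z'
  have hslice (z : Z) : LocLip fun w => Φ (z, w) := hΦ.locLip.comp_prodMk z
  calc |S.E (fun ω => Φ (z, V ω)) - S.E (fun ω => Φ (z', V ω))|
      ≤ 2 * C * (1 + ‖z‖ ^ m + ‖z'‖ ^ m) * ‖z - z'‖ * S.moment V m := by
        refine S.abs_E_sub_le_mul_moment hV (hslice z) (hslice z') (by positivity) fun v => ?_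
        have hzv := norm_prod_pow_le (z, v) m
        have hzv' := norm_prod_pow_le (z', v) m
        dsimp only at hzv hzv'
        calc |Φ (z, v) - Φ (z', v)| ≤ C * (1 + ‖(z, v)‖ ^ m + ‖(z', v)‖ ^ m) * ‖(z, v) - (z', v)‖ :=
              hΦ _ _
          _ ≤ C * (2 * (1 + ‖z‖ ^ m + ‖z'‖ ^ m) * (1 + ‖v‖ ^ m)) * ‖z - z'‖ := by
              gcongr
              · nlinarith [pow_nonneg (norm_nonneg z) m, pow_nonneg (norm_nonneg z') m,
                  pow_nonneg (norm_nonneg v) m]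
              · simp
          _ = _ := by ring
    _ = _ := by ring

section Parabolic

variable {E F : Type*} [NormedAddCommGroup E] [NormedSpace ℝ E]
  [NormedAddCommGroup F] [NormedSpace ℝ F]

def parabolicScaling (t : ℝ) : E × F →L[ℝ] E × F :=
  (√t • ContinuousLinearMap.id ℝ E).prodMap (t • ContinuousLinearMap.id ℝ F)

@[simp]
lemma parabolicScaling_apply (t : ℝ) (v : E × F) : parabolicScaling t v = (√t • v.1, t • v.2) :=
  rfl

lemma norm_parabolicScaling_le {t : ℝ} (ht : 0 ≤ t) :
    ‖(parabolicScaling t : E × F →L[ℝ] E × F)‖ ≤ t + √t := by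
  refine ContinuousLinearMap.opNorm_le_bound _ (by positivity) fun v => ?_
  have hv := norm_nonneg v
  rw [parabolicScaling_apply, Prod.norm_mk, norm_smul, norm_smul, Real.norm_of_nonneg ht,
    Real.norm_of_nonneg (sqrt_nonneg t)]
  exact max_le
    (by nlinarith [mul_le_mul_of_nonneg_left (norm_fst_le v) (sqrt_nonneg t), mul_nonneg ht hv])
    (by nlinarith [mul_le_mul_of_nonneg_left (norm_snd_le v) ht, mul_nonneg (sqrt_nonneg t) hv])

namespace SublinExp

variable {Ω : Type*} (S : SublinExp Ω)

def parabolicMean (V : Ω → E × F) (φ : E × F → ℝ) (t : ℝ) (z : E × F) : ℝ :=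
  S.E fun ω => φ (z + parabolicScaling t (V ω))

variable {V : Ω → E × F} {φ : E × F → ℝ} {C K s t : ℝ} {m : ℕ}

lemma locLipWith_parabolicMean (hV : IsRV S V) (hφ : LocLipWith C m φ) (hC : 0 ≤ C)
    (ht : 0 ≤ t) (hK : t + √t ≤ K) :
    LocLipWith (2 * (C * (1 + K) ^ (m + 1)) * S.moment V m) m (S.parabolicMean V φ t) := by
  have hK0 : 0 ≤ K := by linarith [sqrt_nonneg t]
  exact (hφ.comp_fst_add_apply_snd hC ((norm_parabolicScaling_le ht).trans hK)).E_comp_prodMk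
    S hV (by positivity)

lemma abs_sub_parabolicMean_le (hV : IsRV S V) (hφ : LocLipWith C m φ) (hC : 0 ≤ C)
    (hs : 0 ≤ s) (hK : s + √s ≤ K) (z : E × F) :
    |φ z - S.parabolicMean V φ s z| ≤
      4 * C * (1 + K) ^ m * S.moment V (m + 1) * (1 + ‖z‖ ^ m) * (s + √s) := by
  have hP := norm_parabolicScaling_le (E := E) (F := F) hs
  have hK0 : 0 ≤ K := by linarith [sqrt_nonneg s]
  have hKm : 1 ≤ (1 + K) ^ m := one_le_pow₀ (by linarith)
  have hpoint (v : E × F) : |φ z - φ (z + parabolicScaling s v)| ≤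
      4 * C * (1 + K) ^ m * (1 + ‖z‖ ^ m) * (s + √s) * (1 + ‖v‖ ^ (m + 1)) := by
    have hzv := one_add_norm_add_apply_pow_le (hP.trans hK) z v m
    have hz : 1 + ‖z‖ ^ m ≤ (1 + K) ^ m * ((1 + ‖z‖ ^ m) * (1 + ‖v‖ ^ m)) := by
      calc 1 + ‖z‖ ^ m = 1 * ((1 + ‖z‖ ^ m) * 1) := by ring
        _ ≤ _ := by gcongr; linarith [pow_nonneg (norm_nonneg v) m]
    have hv : (1 + ‖v‖ ^ m) * ‖v‖ ≤ 2 * (1 + ‖v‖ ^ (m + 1)) := by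
      have := pow_le_one_add_pow (norm_nonneg v) (show 1 ≤ m + 1 by omega)
      rw [pow_one] at this
      nlinarith [pow_succ ‖v‖ m, pow_nonneg (norm_nonneg v) (m + 1)]
    have hsv : ‖z - (z + parabolicScaling s v)‖ ≤ (s + √s) * ‖v‖ := by
      rw [sub_add_cancel_left, norm_neg]
      exact ContinuousLinearMap.le_of_opNorm_le (parabolicScaling (E := E) (F := F) s) hP v
    calc |φ z - φ (z + parabolicScaling s v)|
        ≤ C * (1 + ‖z‖ ^ m + ‖z + parabolicScaling s v‖ ^ m) *
            ‖z - (z + parabolicScaling s v)‖ :=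
          hφ _ _
      _ ≤ C * (2 * (1 + K) ^ m * ((1 + ‖z‖ ^ m) * (1 + ‖v‖ ^ m))) * ((s + √s) * ‖v‖) := by
          gcongr
          linarith
      _ = 2 * C * (1 + K) ^ m * (1 + ‖z‖ ^ m) * (s + √s) * ((1 + ‖v‖ ^ m) * ‖v‖) := by ring
      _ ≤ 2 * C * (1 + K) ^ m * (1 + ‖z‖ ^ m) * (s + √s) * (2 * (1 + ‖v‖ ^ (m + 1))) := by
          gcongr
      _ = _ := by ring
  have key := S.abs_E_sub_le_mul_moment hV (LipschitzWith.const (φ z)).locLip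
    (hφ.locLip.comp_add_apply z (parabolicScaling s)) (by positivity) hpoint
  rw [S.const_eq] at key
  exact key.trans_eq (by ring)

lemma parabolicMean_add {Vb : Ω → E × F} (hcopy : IsIndepCopy S V Vb)
    (hscale : SameDistrib S S (fun ω => parabolicScaling t (V ω) + parabolicScaling s (Vb ω))
      fun ω => parabolicScaling (t + s) (V ω))
    (hφ : LocLip φ) (z : E × F) :
    S.parabolicMean V φ (t + s) z =
      S.E fun ω => S.parabolicMean V φ s (z + parabolicScaling t (V ω)) := by
  obtain ⟨hsame, hindep⟩ := hcopy
  have hΦ : LocLip fun p : (E × F) × (E × F) =>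
      φ (z + parabolicScaling t p.1 + parabolicScaling s p.2) := by
    simpa only [ContinuousLinearMap.coprod_apply, add_assoc] using
      hφ.comp_add_apply z ((parabolicScaling (E := E) (F := F) t).coprod (parabolicScaling s))
  calc S.parabolicMean V φ (t + s) z
      = S.E fun ω => φ (z + (parabolicScaling t (V ω) + parabolicScaling s (Vb ω))) :=
        (hscale _ (hφ.comp_add_apply z (ContinuousLinearMap.id ℝ _))).symm
    _ = S.E fun ω => S.E fun ω' =>
          φ (z + parabolicScaling t (V ω) + parabolicScaling s (Vb ω')) := by
        simp only [← add_assoc]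
        exact hindep _ hΦ
    _ = _ := by
        congr 1
        funext ω
        exact (hsame _ (hφ.comp_add_apply _ (parabolicScaling (E := E) (F := F) s))).symm

lemma abs_parabolicMean_sub_parabolicMean_add_le (hV : IsRV S V) {Vb : Ω → E × F}
    (hcopy : IsIndepCopy S V Vb)
    (hscale : SameDistrib S S (fun ω => parabolicScaling t (V ω) + parabolicScaling s (Vb ω))
      fun ω => parabolicScaling (t + s) (V ω))
    (hφ : LocLipWith C m φ) (hC : 0 ≤ C) (ht : 0 ≤ t) (hs : 0 ≤ s) (htK : t + √t ≤ K)
    (hsK : s + √s ≤ K) (z : E × F) :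
    |S.parabolicMean V φ t z - S.parabolicMean V φ (t + s) z| ≤
      4 * C * (1 + K) ^ (2 * m) * S.moment V (m + 1) * S.moment V m * (1 + ‖z‖ ^ m) *
        (s + √s) := by
  have hP := (norm_parabolicScaling_le (E := E) (F := F) ht).trans htK
  have hK0 : 0 ≤ K := by linarith [sqrt_nonneg t]
  have hM := S.one_le_moment hV (m + 1)
  have hc : 0 ≤ 4 * C * (1 + K) ^ m * S.moment V (m + 1) := by positivity
  have hmean := (S.locLipWith_parabolicMean hV hφ hC hs hsK).locLip
  rw [S.parabolicMean_add hcopy hscale hφ.locLip z]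
  refine (S.abs_E_sub_le_mul_moment hV (hφ.locLip.comp_add_apply z (parabolicScaling t))
    (hmean.comp_add_apply z (parabolicScaling t)) (j := m)
    (c := 4 * C * (1 + K) ^ m * S.moment V (m + 1) * (s + √s) * (1 + K) ^ m * (1 + ‖z‖ ^ m))
    (by positivity) fun v => ?_).trans_eq (by ring)
  calc |φ (z + parabolicScaling t v) - S.parabolicMean V φ s (z + parabolicScaling t v)|
      ≤ 4 * C * (1 + K) ^ m * S.moment V (m + 1) * (1 + ‖z + parabolicScaling t v‖ ^ m) *
          (s + √s) :=
        S.abs_sub_parabolicMean_le hV hφ hC hs hsK _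
    _ ≤ 4 * C * (1 + K) ^ m * S.moment V (m + 1) *
          ((1 + K) ^ m * ((1 + ‖z‖ ^ m) * (1 + ‖v‖ ^ m))) * (s + √s) := by
        gcongr
        exact one_add_norm_add_apply_pow_le hP z v m
    _ = _ := by ring

end SublinExp

end Parabolic

lemma IsGDistributed.exists_indepCopy_parabolicScaling {Ω : Type*} {d : ℕ} {S : SublinExp Ω}
    {X Y : Ω → EuclideanSpace ℝ (Fin d)} (hG : IsGDistributed S X Y) :
    ∃ Vb : Ω → EuclideanSpace ℝ (Fin d) × EuclideanSpace ℝ (Fin d),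
      IsIndepCopy S (fun ω => (X ω, Y ω)) Vb ∧ ∀ t s : ℝ, 0 ≤ t → 0 ≤ s →
        SameDistrib S S (fun ω => parabolicScaling t (X ω, Y ω) + parabolicScaling s (Vb ω))
          fun ω => parabolicScaling (t + s) (X ω, Y ω) := by
  obtain ⟨-, Xb, Yb, hcopy, hscale⟩ := hG
  refine ⟨fun ω => (Xb ω, Yb ω), hcopy, fun t s ht hs => ?_⟩
  have h := hscale (√t) (√s) (sqrt_nonneg t) (sqrt_nonneg s)
  rw [sq_sqrt ht, sq_sqrt hs] at h
  convert h using 2 <;> simp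

/-- Regularity estimates for `u(t,x,y) = Ê[φ(x + √t X, y + t Y)]` when `(X, Y)` is
`G`-distributed: local Lipschitz estimate in `(x, y)` and `1/2`-Hölder estimate in `t`. -/
theorem stmt_7 {Ω : Type*} {d : ℕ} (S : SublinExp Ω)
    (X Y : Ω → EuclideanSpace ℝ (Fin d)) (hG : IsGDistributed S X Y)
    (φ : EuclideanSpace ℝ (Fin d) × EuclideanSpace ℝ (Fin d) → ℝ) (hφ : LocLip φ)
    (u : ℝ → EuclideanSpace ℝ (Fin d) → EuclideanSpace ℝ (Fin d) → ℝ)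
    (hu : ∀ t x y, u t x y =
      S.E (fun ω => φ (x + Real.sqrt t • X ω, y + t • Y ω))) :
    ∀ T : ℝ, 0 < T → ∃ (C : ℝ) (k : ℕ), 0 < C ∧ 0 < k ∧
      (∀ t ∈ Set.Icc (0 : ℝ) T, ∀ x y xb yb : EuclideanSpace ℝ (Fin d),
        |u t x y - u t xb yb| ≤
          C * (1 + ‖x‖ ^ k + ‖y‖ ^ k + ‖xb‖ ^ k + ‖yb‖ ^ k) * (‖x - xb‖ + ‖y - yb‖)) ∧
      (∀ t s : ℝ, 0 ≤ t → 0 ≤ s → t + s ≤ T → ∀ x y : EuclideanSpace ℝ (Fin d),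
        |u t x y - u (t + s) x y| ≤
          C * (1 + ‖x‖ ^ k + ‖y‖ ^ k) * (s + Real.sqrt s)) := by
  intro T _
  set V := fun ω => (X ω, Y ω)
  have hV : IsRV S V := hG.1
  obtain ⟨Vb, hcopy, hscale⟩ := hG.exists_indepCopy_parabolicScaling
  obtain ⟨C₀, hC₀, m, hm, hφm⟩ := hφ.exists_locLipWith_pos
  have hu' (t x y) : u t x y = S.parabolicMean V φ t (x, y) := by
    rw [hu]; rfl
  set K := T + √T
  have hK (t : ℝ) (ht : t ≤ T) : t + √t ≤ K := add_le_add ht (sqrt_le_sqrt ht)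
  have hM := S.one_le_moment hV m
  set C₁ := 2 * (C₀ * (1 + K) ^ (m + 1)) * S.moment V m
  set C₂ := 4 * C₀ * (1 + K) ^ (2 * m) * S.moment V (m + 1) * S.moment V m
  have hC₂ : 0 ≤ C₂ := by have := S.one_le_moment hV (m + 1); positivity
  refine ⟨C₁ + C₂, m, by positivity, hm, ?_, ?_⟩
  · rintro t ⟨ht, htT⟩ x y xb yb
    have hxy := norm_prod_pow_le (x, y) m
    have hxyb := norm_prod_pow_le (xb, yb) m
    have hsub : ‖(x, y) - (xb, yb)‖ ≤ ‖x - xb‖ + ‖y - yb‖ := norm_prod_le_add _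
    dsimp only at hxy hxyb
    rw [hu', hu']
    refine (S.locLipWith_parabolicMean hV hφm hC₀.le ht (hK t htT) _ _).trans ?_
    gcongr ?_ * ?_ * ?_
    · exact le_add_of_nonneg_right hC₂
    · linarith
  · intro t s ht hs hts x y
    have hxy := norm_prod_pow_le (x, y) m
    dsimp only at hxy
    rw [hu', hu']
    refine (S.abs_parabolicMean_sub_parabolicMean_add_le hV hcopy (hscale t s ht hs) hφm hC₀.le
      ht hs (hK t (by linarith)) (hK s (by linarith)) _).trans ?_
    gcongr ?_ * ?_ * _
    · exact le_add_of_nonneg_left (by positivity)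
    · linarith
end
end
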